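/- arXiv:2201.07503 — 7 statements merged into one kernel-verified Lean document; each statement's English description precedes it below -/
import Mathlib

section
/- First Dual Distance Bound: if G is systematic with dual distance d⊥ and R is a recovery G-system, then every (λ_1,…,λ_k) ∈ Λ(R, 1) satisfies ∑_{i=1}^k ( min{λ_i, 1} + (d⊥ − 1) · max{0, λ_i − 1} ) ≤ n. -/
open Finset

/-- `R` is a recovery set for object `i`: the standard basis vector `e i` lies in the
span of the columns of `G` indexed by `R`. -/
def recSet {F : Type} [Field F] {k n : ℕ} (G : Matrix (Fin k) (Fin n) F)
    (i : Fin k) (R : Finset (Fin n)) : Prop :=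
  (Pi.single i 1 : Fin k → F) ∈
    Submodule.span F ((fun j => fun r => G r j) '' (R : Set (Fin n)))

/-- A recovery `G`-system: each `Rs i` is a nonempty collection of recovery sets for object `i`. -/
def recSystem {F : Type} [Field F] {k n : ℕ} (G : Matrix (Fin k) (Fin n) F)
    (Rs : Fin k → Finset (Finset (Fin n))) : Prop :=
  ∀ i, (Rs i).Nonempty ∧ ∀ R ∈ Rs i, recSet G i R

/-- Membership of a rate vector `lam` in the service rate region `Λ(Rs, μ)`:
there is a feasible allocation. -/
def inRegion {k n : ℕ} (Rs : Fin k → Finset (Finset (Fin n))) (μ : ℝ)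
    (lam : Fin k → ℝ) : Prop :=
  ∃ a : Fin k → Finset (Fin n) → ℝ,
    (∀ i R, 0 ≤ a i R) ∧
    (∀ i, ∑ R ∈ Rs i, a i R = lam i) ∧
    (∀ j : Fin n, ∑ i, ∑ R ∈ Rs i, (if j ∈ R then a i R else 0) ≤ μ)

/-- The dual of the code generated by `G` (the row space of `G`). -/
def dualCode {F : Type} [Field F] {k n : ℕ} (G : Matrix (Fin k) (Fin n) F) :
    Set (Fin n → F) :=
  {y | ∀ c ∈ Submodule.span F (Set.range (fun i => fun j => G i j)),
    ∑ j, y j * c j = 0}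

/-- `G` is systematic: its first `k` columns form the `k × k` identity matrix. -/
def systematic {F : Type} [Field F] {k n : ℕ} (hkn : k ≤ n)
    (G : Matrix (Fin k) (Fin n) F) : Prop :=
  ∀ i r : Fin k, G r (Fin.castLE hkn i) = if r = i then 1 else 0

lemma mem_dualCode_of {F : Type} [Field F] {k n : ℕ} (G : Matrix (Fin k) (Fin n) F)
    (y : Fin n → F) (hy : ∀ r, ∑ j, y j * G r j = 0) : y ∈ dualCode G := by
  intro c hc
  induction hc using Submodule.span_induction with
  | mem c hc => obtain ⟨r, rfl⟩ := hc; exact hy r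
  | zero => simp
  | add c1 c2 _ _ h1 h2 => simpa [mul_add, Finset.sum_add_distrib] using by rw [h1, h2]; ring
  | smul t c _ h1 =>
      simp only [Pi.smul_apply, smul_eq_mul, mul_left_comm]
      rw [← Finset.mul_sum, h1, mul_zero]

lemma key_card {F : Type} [Field F] [DecidableEq F] {k n : ℕ}
    (hkn : k ≤ n) (G : Matrix (Fin k) (Fin n) F) (hsys : systematic hkn G)
    (d : ℕ) (hdle : ∀ y ∈ dualCode G, y ≠ 0 → d ≤ hammingNorm y)
    (i : Fin k) (R : Finset (Fin n)) (hrec : recSet G i R)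
    (hni : Fin.castLE hkn i ∉ R) : d ≤ R.card + 1 := by
  classical
  rw [recSet, Finsupp.mem_span_image_iff_linearCombination] at hrec
  obtain ⟨l, hls, hl⟩ := hrec
  set i' := Fin.castLE hkn i with hi'
  set y : Fin n → F := fun j => l j - (if j = i' then 1 else 0) with hy
  have hyne : y ≠ 0 := by
    intro h0
    have : y i' = 0 := by rw [h0]; rfl
    have hli' : l i' = 0 := by
      by_contra hc
      exact hni (hls (Finsupp.mem_support_iff.mpr hc))
    simp [hy, hli'] at this
  have hdualy : y ∈ dualCode G := by
    apply mem_dualCode_of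
    intro r
    have heval : ∑ j, l j * G r j = (if r = i then 1 else 0) := by
      have := congrFun hl r
      rw [Finsupp.linearCombination_apply, Finsupp.sum] at this
      have h2 : ∑ j ∈ l.support, (l j • fun r => G r j) r = ∑ j ∈ l.support, l j * G r j := by
        simp
      rw [Finset.sum_apply] at this
      rw [h2] at this
      rw [← Finset.sum_subset (Finset.subset_univ l.support)
        (fun j _ hj => by simp [Finsupp.notMem_support_iff.mp hj])]
      rw [this, Pi.single_apply]
    have : ∑ j, y j * G r j = ∑ j, l j * G r j - G r i' := by
      simp only [hy, sub_mul, Finset.sum_sub_distrib]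
      congr 1
      rw [Finset.sum_eq_single i']
      · simp
      · intro b _ hb; simp [hb]
      · simp
    rw [this, heval, hsys i r]
    ring
  have hnorm : hammingNorm y ≤ R.card + 1 := by
    have hsub : ({j | y j ≠ 0} : Finset (Fin n)) ⊆ insert i' R := by
      intro j hj
      simp only [Finset.mem_filter, Finset.mem_univ, true_and] at hj
      by_cases hji : j = i'
      · rw [hji]; exact Finset.mem_insert_self i' R
      · apply Finset.mem_insert_of_mem
        by_contra hjR
        have hlj : l j = 0 := by
          by_contra hc
          exact hjR (hls (Finsupp.mem_support_iff.mpr hc))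
        simp [hy, hlj, hji] at hj
    calc hammingNorm y ≤ (insert i' R).card := Finset.card_le_card hsub
      _ ≤ R.card + 1 := Finset.card_insert_le _ _
  exact le_trans (hdle y hdualy hyne) hnorm

lemma rec_nonempty {F : Type} [Field F] {k n : ℕ} (G : Matrix (Fin k) (Fin n) F)
    (i : Fin k) (R : Finset (Fin n)) (hrec : recSet G i R) : 1 ≤ R.card := by
  rcases Finset.eq_empty_or_nonempty R with rfl | h
  · exfalso
    rw [recSet] at hrec
    simp only [Finset.coe_empty, Set.image_empty, Submodule.span_empty,
      Submodule.mem_bot] at hrec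
    have := congrFun hrec i
    simp at this
  · exact Finset.card_pos.mpr h


/-- First Dual Distance Bound: for systematic `G` with dual distance `d⊥`,
every `lam ∈ Λ(Rs, 1)` satisfies
`∑ i (min(lam i, 1) + (d⊥ − 1) · max(0, lam i − 1)) ≤ n`. -/
theorem first_dual_distance_bound {F : Type} [Field F] [Fintype F] [DecidableEq F] {k n : ℕ}
    (hkn : k ≤ n) (G : Matrix (Fin k) (Fin n) F)
    (hrank : G.rank = k) (hcol : ∀ j : Fin n, ∃ i : Fin k, G i j ≠ 0)
    (hsys : systematic hkn G)
    (d : ℕ)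
    (hdmin : (∃ y ∈ dualCode G, y ≠ 0 ∧ hammingNorm y = d) ∧
      ∀ y ∈ dualCode G, y ≠ 0 → d ≤ hammingNorm y)
    (Rs : Fin k → Finset (Finset (Fin n))) (hRs : recSystem G Rs)
    (lam : Fin k → ℝ) (h : inRegion Rs 1 lam) :
    ∑ i, (min (lam i) 1 + ((d : ℝ) - 1) * max 0 (lam i - 1)) ≤ n := by
  classical
  obtain ⟨a, ha0, hasum, hacap⟩ := h
  obtain ⟨⟨y0, hy0d, hy0n, hy0norm⟩, hdle⟩ := hdmin
  -- d ≥ 2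
  have hd2 : 2 ≤ d := by
    rcases Nat.lt_or_ge d 2 with hlt | hge
    · exfalso
      interval_cases d
      · exact hy0n (hammingNorm_eq_zero.mp hy0norm)
      · obtain ⟨j0, hj0⟩ := Finset.card_eq_one.mp hy0norm
        have hj0ne : y0 j0 ≠ 0 := by
          have : j0 ∈ ({j | y0 j ≠ 0} : Finset (Fin n)) := by
            rw [show ({j | y0 j ≠ 0} : Finset (Fin n)) = {j0} from hj0]
            exact Finset.mem_singleton_self j0
          simpa using this
        have hzero : ∀ j, j ≠ j0 → y0 j = 0 := by
          intro j hj
          by_contra hc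
          have : j ∈ ({j | y0 j ≠ 0} : Finset (Fin n)) := by simpa using hc
          rw [show ({j | y0 j ≠ 0} : Finset (Fin n)) = {j0} from hj0] at this
          exact hj (Finset.mem_singleton.mp this)
        obtain ⟨r, hr⟩ := hcol j0
        have hrow := hy0d (fun j => G r j) (Submodule.subset_span ⟨r, rfl⟩)
        rw [Finset.sum_eq_single j0 (fun b _ hb => by rw [hzero b hb, zero_mul])
          (by simp)] at hrow
        exact hr (by
          rcases mul_eq_zero.mp hrow with h1 | h1
          · exact absurd h1 hj0ne
          · exact h1)
    · exact hge
  -- per-set card bounds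
  have hcard1 : ∀ i : Fin k, ∀ R ∈ Rs i, (1 : ℝ) ≤ R.card := fun i R hR => by
    exact_mod_cast rec_nonempty G i R ((hRs i).2 R hR)
  have hcardd : ∀ i : Fin k, ∀ R ∈ Rs i, Fin.castLE hkn i ∉ R → ((d : ℝ) - 1) ≤ R.card := by
    intro i R hR hni
    have := key_card hkn G hsys d hdle i R ((hRs i).2 R hR) hni
    have : (d : ℝ) ≤ R.card + 1 := by exact_mod_cast this
    linarith
  -- total capacity
  have htotal : ∑ i, ∑ R ∈ Rs i, (R.card : ℝ) * a i R ≤ n := by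
    have : ∑ j : Fin n, ∑ i, ∑ R ∈ Rs i, (if j ∈ R then a i R else 0) ≤ ∑ j : Fin n, (1 : ℝ) :=
      Finset.sum_le_sum fun j _ => hacap j
    rw [Finset.sum_const, Finset.card_univ, Fintype.card_fin, nsmul_eq_mul, mul_one] at this
    calc ∑ i, ∑ R ∈ Rs i, (R.card : ℝ) * a i R
        = ∑ j : Fin n, ∑ i, ∑ R ∈ Rs i, (if j ∈ R then a i R else 0) := by
          rw [Finset.sum_comm]
          refine Finset.sum_congr rfl fun i _ => ?_
          rw [Finset.sum_comm]
          refine Finset.sum_congr rfl fun R _ => ?_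
          rw [Finset.sum_ite_mem, Finset.univ_inter, Finset.sum_const, nsmul_eq_mul]
      _ ≤ n := this
  -- per-object bound
  have hper : ∀ i : Fin k,
      min (lam i) 1 + ((d : ℝ) - 1) * max 0 (lam i - 1) ≤ ∑ R ∈ Rs i, (R.card : ℝ) * a i R := by
    intro i
    set i' := Fin.castLE hkn i with hi'
    set T := ∑ R ∈ (Rs i).filter (fun R => i' ∈ R), a i R with hT
    set S := ∑ R ∈ (Rs i).filter (fun R => i' ∉ R), a i R with hS
    have hTS : T + S = lam i := by
      rw [hT, hS, Finset.sum_filter_add_sum_filter_not, hasum i]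
    have hT0 : 0 ≤ T := Finset.sum_nonneg fun R _ => ha0 i R
    have hS0 : 0 ≤ S := Finset.sum_nonneg fun R _ => ha0 i R
    have hT1 : T ≤ 1 := by
      have hcap := hacap i'
      have h1 : T = ∑ R ∈ Rs i, (if i' ∈ R then a i R else 0) := by
        rw [hT, Finset.sum_filter]
      have h2 : ∑ R ∈ Rs i, (if i' ∈ R then a i R else 0) ≤
          ∑ i'' , ∑ R ∈ Rs i'', (if i' ∈ R then a i'' R else 0) :=
        Finset.single_le_sum (f := fun i'' => ∑ R ∈ Rs i'', (if i' ∈ R then a i'' R else 0))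
          (fun i'' _ => Finset.sum_nonneg fun R _ => by by_cases hm : i' ∈ R <;> simp [hm, ha0])
          (Finset.mem_univ i)
      linarith
    have hsplit : ∑ R ∈ Rs i, (R.card : ℝ) * a i R ≥ T + ((d : ℝ) - 1) * S := by
      rw [← Finset.sum_filter_add_sum_filter_not (Rs i) (fun R => i' ∈ R)
        (fun R => (R.card : ℝ) * a i R)]
      have hA : T ≤ ∑ R ∈ (Rs i).filter (fun R => i' ∈ R), (R.card : ℝ) * a i R := by
        rw [hT]
        refine Finset.sum_le_sum fun R hR => ?_
        have hRm := Finset.mem_filter.mp hR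
        nlinarith [hcard1 i R hRm.1, ha0 i R]
      have hB : ((d : ℝ) - 1) * S ≤
          ∑ R ∈ (Rs i).filter (fun R => i' ∉ R), (R.card : ℝ) * a i R := by
        rw [hS, Finset.mul_sum]
        refine Finset.sum_le_sum fun R hR => ?_
        have hRm := Finset.mem_filter.mp hR
        nlinarith [hcardd i R hRm.1 hRm.2, ha0 i R]
      linarith
    have hdR : (2 : ℝ) ≤ d := by exact_mod_cast hd2
    have harith : min (lam i) 1 + ((d : ℝ) - 1) * max 0 (lam i - 1) ≤ T + ((d : ℝ) - 1) * S := by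
      rcases le_or_gt (lam i) 1 with hl | hl
      · rw [min_eq_left hl, max_eq_left (by linarith)]
        nlinarith
      · rw [min_eq_right (le_of_lt hl), max_eq_right (by linarith)]
        nlinarith
    linarith
  calc ∑ i, (min (lam i) 1 + ((d : ℝ) - 1) * max 0 (lam i - 1))
      ≤ ∑ i, ∑ R ∈ Rs i, (R.card : ℝ) * a i R := Finset.sum_le_sum fun i _ => hper i
    _ ≤ n := htotal
end

section
/- If G is a systematic generator matrix of an [n,k] MDS code, then every (λ_1,…,λ_k) in the service rate region satisfies ∑_{i=1}^k ( min{λ_i, 1} + k · max{0, λ_i − 1} ) ≤ n. -/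
/-! The systematic column of object `i` has capacity 1, so it serves object `i` at rate at most 1.
Every other recovery set `R` of object `i` has at least `k` servers: otherwise enlarge `R` to a
set `T` of `k - 1` columns avoiding the systematic column of `i`, and pick `m ≠ 0` with `mG`
vanishing on `T`. As `eᵢ` lies in the span of the columns in `R`, also `mᵢ = 0`, which is the
entry of `mG` at the systematic column of `i`; so the nonzero codeword `mG` has weight at most
`n - k`, below the MDS distance. Hence serving `λᵢ` occupies at least
`min(λᵢ, 1) + k · max(0, λᵢ - 1)` units of the total capacity `n`. -/

open Finset

section Allocation

variable {k n : ℕ}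

def serverLoad (Rs : Fin k → Finset (Finset (Fin n))) (a : Fin k → Finset (Fin n) → ℝ)
    (j : Fin n) : ℝ :=
  ∑ i, ∑ R ∈ Rs i, if j ∈ R then a i R else 0

lemma sum_sum_mul_card_eq_sum_serverLoad (Rs : Fin k → Finset (Finset (Fin n)))
    (a : Fin k → Finset (Fin n) → ℝ) :
    ∑ i, ∑ R ∈ Rs i, a i R * #R = ∑ j, serverLoad Rs a j := by
  simp only [serverLoad]
  rw [Finset.sum_comm]
  refine Finset.sum_congr rfl fun i _ => ?_
  rw [Finset.sum_comm]
  refine Finset.sum_congr rfl fun R _ => ?_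
  simp [Finset.sum_ite_mem, mul_comm]

lemma sum_filter_mem_le_serverLoad {Rs : Fin k → Finset (Finset (Fin n))}
    {a : Fin k → Finset (Fin n) → ℝ} (ha : ∀ i R, 0 ≤ a i R) (i : Fin k) (j : Fin n) :
    ∑ R ∈ Rs i with j ∈ R, a i R ≤ serverLoad Rs a j := by
  rw [Finset.sum_filter]
  exact Finset.single_le_sum (f := fun i => ∑ R ∈ Rs i, if j ∈ R then a i R else 0)
    (fun i _ => Finset.sum_nonneg fun R _ => by split_ifs <;> simp [ha]) (Finset.mem_univ i)

end Allocation

lemma min_add_mul_max_le {s t κ : ℝ} (hs : s ≤ 1) (ht : 0 ≤ t) (hκ : 1 ≤ κ) :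
    min (s + t) 1 + κ * max 0 (s + t - 1) ≤ s + κ * t := by
  rcases le_total (s + t) 1 with h | h
  · rw [min_eq_left h, max_eq_left (by linarith)]
    nlinarith
  · rw [min_eq_right h, max_eq_right (by linarith)]
    nlinarith

lemma min_add_mul_max_le_sum_mul_card {k n : ℕ} {Rs : Fin k → Finset (Finset (Fin n))}
    {a : Fin k → Finset (Fin n) → ℝ} (ha : ∀ i R, 0 ≤ a i R)
    (hcap : ∀ j, serverLoad Rs a j ≤ 1) {m : ℕ} (hm : 1 ≤ m) (i : Fin k) (j : Fin n)
    (hcard : ∀ R ∈ Rs i, j ∉ R → m ≤ #R) :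
    min (∑ R ∈ Rs i, a i R) 1 + m * max 0 (∑ R ∈ Rs i, a i R - 1) ≤
      ∑ R ∈ Rs i, a i R * #R := by
  set s := ∑ R ∈ Rs i with j ∈ R, a i R
  set t := ∑ R ∈ Rs i with j ∉ R, a i R
  have hs : s ≤ 1 := (sum_filter_mem_le_serverLoad ha i j).trans (hcap j)
  have ht : 0 ≤ t := Finset.sum_nonneg fun R _ => ha i R
  have hthrough : s ≤ ∑ R ∈ Rs i with j ∈ R, a i R * #R :=
    Finset.sum_le_sum fun R hR => le_mul_of_one_le_right (ha i R) <| by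
      exact_mod_cast Finset.card_pos.mpr ⟨j, (Finset.mem_filter.mp hR).2⟩
  have hbypass : m * t ≤ ∑ R ∈ Rs i with j ∉ R, a i R * #R := by
    rw [Finset.mul_sum]
    refine Finset.sum_le_sum fun R hR => ?_
    rw [mul_comm]
    obtain ⟨hRi, hjR⟩ := Finset.mem_filter.mp hR
    exact mul_le_mul_of_nonneg_left (by exact_mod_cast hcard R hRi hjR) (ha i R)
  rw [← Finset.sum_filter_add_sum_filter_not (Rs i) (j ∈ ·),
    ← Finset.sum_filter_add_sum_filter_not (Rs i) (j ∈ ·) (fun R => a i R * #R)]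
  exact (min_add_mul_max_le hs ht (by exact_mod_cast hm)).trans (add_le_add hthrough hbypass)

lemma hammingNorm_le_sub_card {ι β : Type*} [Fintype ι] [DecidableEq ι] [DecidableEq β] [Zero β]
    {c : ι → β} {S : Finset ι} (hc : ∀ j ∈ S, c j = 0) :
    hammingNorm c ≤ Fintype.card ι - #S := by
  rw [← Finset.card_compl]
  exact Finset.card_le_card fun j hj =>
    Finset.mem_compl.mpr fun hjS => (Finset.mem_filter.mp hj).2 (hc j hjS)

section Code

open Matrix

variable {F : Type} [Field F] {k n : ℕ}

lemma vecMul_mem_span_rows (G : Matrix (Fin k) (Fin n) F) (m : Fin k → F) :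
    m ᵥ* G ∈ Submodule.span F (Set.range (fun i => fun j => G i j)) :=
  (range_vecMulLinear G).le ⟨m, rfl⟩

lemma exists_ne_zero_vecMul_eq_zero_on (G : Matrix (Fin k) (Fin n) F) {T : Finset (Fin n)}
    (hT : #T < k) : ∃ m ≠ 0, ∀ j ∈ T, (m ᵥ* G) j = 0 := by
  let φ := (LinearMap.funLeft F F (Subtype.val : T → Fin n)).comp G.vecMulLinear
  have hφ : LinearMap.ker φ ≠ ⊥ :=
    LinearMap.ker_ne_bot_of_finrank_lt (by simpa [Module.finrank_fintype_fun_eq_card] using hT)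
  obtain ⟨m, hm, hm0⟩ := (Submodule.ne_bot_iff _).mp hφ
  exact ⟨m, hm0, fun j hj => congr_fun hm ⟨j, hj⟩⟩

lemma recSet.eq_zero_of_vecMul_eq_zero_on {G : Matrix (Fin k) (Fin n) F} {i : Fin k}
    {R : Finset (Fin n)} (hR : recSet G i R) {m : Fin k → F} (hm : ∀ j ∈ R, (m ᵥ* G) j = 0) :
    m i = 0 := by
  have : ∀ v ∈ Submodule.span F ((fun j => fun r => G r j) '' (R : Set (Fin n))),
      m ⬝ᵥ v = 0 := by
    intro v hv
    induction hv using Submodule.span_induction with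
    | mem v hv => obtain ⟨j, hj, rfl⟩ := hv; exact hm j hj
    | zero => simp
    | add x y _ _ hx hy => rw [dotProduct_add, hx, hy, add_zero]
    | smul r x _ hx => rw [dotProduct_smul, hx, smul_zero]
  simpa [dotProduct_single] using this _ hR

lemma systematic.vecMul_castLE {hkn : k ≤ n} {G : Matrix (Fin k) (Fin n) F}
    (hsys : systematic hkn G) (m : Fin k → F) (i : Fin k) :
    (m ᵥ* G) (Fin.castLE hkn i) = m i := by
  simp [Matrix.vecMul, dotProduct, hsys i]

lemma card_le_of_recSet_of_castLE_notMem {hkn : k ≤ n} {G : Matrix (Fin k) (Fin n) F}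
    [DecidableEq F] (hsys : systematic hkn G)
    (hd : ∀ c ∈ Submodule.span F (Set.range (fun i => fun j => G i j)),
      c ≠ 0 → n - k + 1 ≤ hammingNorm c)
    {i : Fin k} {R : Finset (Fin n)} (hR : recSet G i R) (hiR : Fin.castLE hkn i ∉ R) :
    k ≤ #R := by
  by_contra! hlt
  set c := Fin.castLE hkn i
  obtain ⟨T, hRT, hT, hTcard⟩ := Finset.exists_subsuperset_card_eq
    (Finset.subset_erase.mpr ⟨Finset.subset_univ R, hiR⟩) (Nat.le_sub_one_of_lt hlt)
    (by rw [Finset.card_erase_of_mem (Finset.mem_univ c), Finset.card_univ, Fintype.card_fin]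
        omega)
  have hcT : c ∉ T := fun h => (Finset.mem_erase.mp (hT h)).1 rfl
  obtain ⟨m, hm0, hmT⟩ := exists_ne_zero_vecMul_eq_zero_on G (T := T) (by omega)
  have hmi : m i = 0 := hR.eq_zero_of_vecMul_eq_zero_on fun j hj => hmT j (hRT hj)
  have hvanish : ∀ j ∈ insert c T, (m ᵥ* G) j = 0 := by
    simpa [c, hsys.vecMul_castLE, hmi] using hmT
  have hcodeword : m ᵥ* G = 0 := by
    by_contra hne
    have hlow := hd _ (vecMul_mem_span_rows G m) hne
    have hup := hammingNorm_le_sub_card hvanish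
    rw [Fintype.card_fin, Finset.card_insert_of_notMem hcT] at hup
    omega
  exact hm0 (funext fun r => by rw [← hsys.vecMul_castLE m r, hcodeword]; rfl)

end Code

theorem mds_region_bound_general {F : Type} [Field F] [DecidableEq F] {k n : ℕ}
    (hkn : k ≤ n) (G : Matrix (Fin k) (Fin n) F)
    (hsys : systematic hkn G)
    (d : ℕ)
    (hdmin : (∃ c ∈ Submodule.span F (Set.range (fun i => fun j => G i j)),
        c ≠ 0 ∧ hammingNorm c = d) ∧
      ∀ c ∈ Submodule.span F (Set.range (fun i => fun j => G i j)),
        c ≠ 0 → d ≤ hammingNorm c)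
    (hMDS : d = n - k + 1)
    (Rs : Fin k → Finset (Finset (Fin n))) (hRs : recSystem G Rs)
    (lam : Fin k → ℝ) (h : inRegion Rs 1 lam) :
    ∑ i, (min (lam i) 1 + (k : ℝ) * max 0 (lam i - 1)) ≤ n := by
  obtain ⟨a, ha, hlam, hcap⟩ := h
  have hd : ∀ c ∈ Submodule.span F (Set.range (fun i => fun j => G i j)),
      c ≠ 0 → n - k + 1 ≤ hammingNorm c := hMDS ▸ hdmin.2
  calc ∑ i, (min (lam i) 1 + (k : ℝ) * max 0 (lam i - 1))
      ≤ ∑ i, ∑ R ∈ Rs i, a i R * #R := Finset.sum_le_sum fun i _ => by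
        rw [← hlam i]
        exact min_add_mul_max_le_sum_mul_card ha hcap i.pos i (Fin.castLE hkn i)
          fun R hR => card_le_of_recSet_of_castLE_notMem hsys hd ((hRs i).2 R hR)
    _ = ∑ j, serverLoad Rs a j := sum_sum_mul_card_eq_sum_serverLoad Rs a
    _ ≤ ∑ _j : Fin n, 1 := Finset.sum_le_sum fun j _ => hcap j
    _ = n := by simp

/-- if `G` is a systematic generator matrix of an `[n,k]` MDS code
(minimum distance `n − k + 1`), then every `lam` in the service rate region satisfies
`∑ i (min(lam i, 1) + k · max(0, lam i − 1)) ≤ n`. -/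
theorem mds_region_bound {F : Type} [Field F] [Fintype F] [DecidableEq F] {k n : ℕ}
    (hkn : k ≤ n) (G : Matrix (Fin k) (Fin n) F)
    (hrank : G.rank = k) (hsys : systematic hkn G)
    (d : ℕ)
    (hdmin : (∃ c ∈ Submodule.span F (Set.range (fun i => fun j => G i j)),
        c ≠ 0 ∧ hammingNorm c = d) ∧
      ∀ c ∈ Submodule.span F (Set.range (fun i => fun j => G i j)),
        c ≠ 0 → d ≤ hammingNorm c)
    (hMDS : d = n - k + 1)
    (Rs : Fin k → Finset (Finset (Fin n))) (hRs : recSystem G Rs)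
    (lam : Fin k → ℝ) (h : inRegion Rs 1 lam) :
    ∑ i, (min (lam i) 1 + (k : ℝ) * max 0 (lam i - 1)) ≤ n :=
  mds_region_bound_general hkn G hsys d hdmin hMDS Rs hRs lam h
end

section
/- Let G_i = (G | e_i^T) be G with e_i appended as column n+1, generating code C_i with dual C_i^⊥. Then R ⊆ {1,…,n} is a recovery set for object i if and only if there exists x ∈ C_i^⊥ with σ(x) ⊆ R ∪ {n+1} and n+1 ∈ σ(x). -/
open Finset

/-- The `r`-th row of the matrix `G_i = (G | e_iᵀ)`, i.e. `G` with the `i`-th standard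
basis vector appended as column `n+1`. -/
def GiRow {F : Type} [Field F] {k n : ℕ} (G : Matrix (Fin k) (Fin n) F) (i : Fin k)
    (r : Fin k) : Fin (n + 1) → F :=
  Fin.snoc (fun j => G r j) (if r = i then 1 else 0)

/-- The dual `C_i^⊥` of the code `C_i` generated by `G_i = (G | e_iᵀ)`. -/
def Ciperp {F : Type} [Field F] {k n : ℕ} (G : Matrix (Fin k) (Fin n) F) (i : Fin k) :
    Set (Fin (n + 1) → F) :=
  {y | ∀ c ∈ Submodule.span F (Set.range (GiRow G i)), ∑ j, y j * c j = 0}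

/-- `R` is a recovery set for object `i` iff there is `x ∈ C_i^⊥` with
`σ(x) ⊆ R ∪ {n+1}` and `n+1 ∈ σ(x)`. -/
theorem recovery_iff_extended_dual_codeword {F : Type} [Field F] [Fintype F] [DecidableEq F] {k n : ℕ}
    (G : Matrix (Fin k) (Fin n) F) (hrank : G.rank = k)
    (i : Fin k) (R : Finset (Fin n)) :
    recSet G i R ↔
      ∃ x ∈ Ciperp G i,
        {j : Fin (n + 1) | x j ≠ 0} ⊆
          (Fin.castSucc '' (R : Set (Fin n))) ∪ {Fin.last n} ∧
        x (Fin.last n) ≠ 0 := by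
  classical
  constructor
  · intro h
    rw [recSet] at h
    obtain ⟨l, hl, hrep⟩ := (Finsupp.mem_span_image_iff_linearCombination F).mp h
    have hval : ∀ r' : Fin k, ∑ j ∈ l.support, l j * G r' j
        = (if r' = i then (1:F) else 0) := by
      intro r'
      have h1 := congrFun hrep r'
      simp only [Finsupp.linearCombination_apply, Finsupp.sum_apply, Finsupp.sum, Finset.sum_apply,
        Pi.smul_apply, smul_eq_mul, Pi.single_apply] at h1
      exact h1
    refine ⟨Fin.snoc (fun j => l j) (-1), ?_, ?_, ?_⟩
    · intro c hc
      induction hc using Submodule.span_induction with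
      | mem c hc =>
        obtain ⟨r, rfl⟩ := hc
        rw [Fin.sum_univ_castSucc]
        simp only [GiRow, Fin.snoc_castSucc, Fin.snoc_last]
        have hsum : ∑ j : Fin n, l j * G r j = ∑ j ∈ l.support, l j * G r j := by
          refine (Finset.sum_subset (Finset.subset_univ _) ?_).symm
          intro j _ hj
          simp [Finsupp.notMem_support_iff.mp hj]
        rw [hsum, hval r]
        ring
      | zero => simp
      | add c d _ _ hc hd =>
        simp only [Pi.add_apply, mul_add, Finset.sum_add_distrib, hc, hd, add_zero]
      | smul a c _ hc =>
        simp only [Pi.smul_apply, smul_eq_mul, mul_left_comm, ← Finset.mul_sum, hc, mul_zero]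
    · intro j hj
      induction j using Fin.lastCases with
      | last => exact Or.inr rfl
      | cast j =>
        simp only [Set.mem_setOf_eq, Fin.snoc_castSucc, ne_eq] at hj
        exact Or.inl ⟨j, Finsupp.mem_supported F l |>.mp hl (Finsupp.mem_support_iff.mpr hj), rfl⟩
    · simp [Fin.snoc_last]
  · rintro ⟨x, hx, hsupp, hlast⟩
    have key : ∀ r, (∑ j : Fin n, x (Fin.castSucc j) * G r j)
        + x (Fin.last n) * (if r = i then 1 else 0) = 0 := by
      intro r
      have h1 := hx (GiRow G i r) (Submodule.subset_span ⟨r, rfl⟩)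
      rw [Fin.sum_univ_castSucc] at h1
      simpa [GiRow] using h1
    have hzero : ∀ j : Fin n, j ∉ R → x (Fin.castSucc j) = 0 := by
      intro j hj
      by_contra hne
      rcases hsupp hne with h | h
      · obtain ⟨j', hj', hjj⟩ := h
        exact hj (by rwa [Fin.castSucc_inj.mp hjj] at hj')
      · exact (Fin.castSucc_lt_last j).ne h
    rw [recSet]
    have heq : (Pi.single i 1 : Fin k → F)
        = ∑ j ∈ R, (-(x (Fin.castSucc j)) * (x (Fin.last n))⁻¹) • (fun r => G r j) := by
      funext r
      have hk := key r
      have hsum : ∑ j : Fin n, x (Fin.castSucc j) * G r j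
          = ∑ j ∈ R, x (Fin.castSucc j) * G r j := by
        refine (Finset.sum_subset (Finset.subset_univ _) ?_).symm
        intro j _ hj
        simp [hzero j hj]
      rw [hsum] at hk
      simp only [Finset.sum_apply, Pi.smul_apply, smul_eq_mul, Pi.single_apply]
      have : ∑ j ∈ R, (-(x (Fin.castSucc j)) * (x (Fin.last n))⁻¹) * G r j
          = -((x (Fin.last n))⁻¹) * ∑ j ∈ R, x (Fin.castSucc j) * G r j := by
        rw [Finset.mul_sum]; apply Finset.sum_congr rfl; intro j _; ring
      rw [this]
      have hS : ∑ j ∈ R, x (Fin.castSucc j) * G r j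
          = -(x (Fin.last n) * (if r = i then 1 else 0)) :=
        eq_neg_of_add_eq_zero_left hk
      rw [hS]
      rw [neg_mul_neg, ← mul_assoc, inv_mul_cancel₀ hlast, one_mul]
    rw [heq]
    exact Submodule.sum_mem _ fun j hj =>
      Submodule.smul_mem _ _ (Submodule.subset_span ⟨j, hj, rfl⟩)
end

section
/- Every recovery set R for object i satisfies |R| ≥ δ_i^1 − 1, where δ_i^1 is the minimum Hamming weight of a codeword of C_i^⊥ whose support contains n+1. -/
open Finset

/-- every recovery set `R` for object `i` satisfies `|R| ≥ δ_i^1 − 1`,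
where `δ_i^1` is the minimum weight of a codeword of `C_i^⊥` with `n+1` in its support. -/
theorem recovery_card_ge_delta1 {F : Type} [Field F] [Fintype F] [DecidableEq F] {k n : ℕ}
    (G : Matrix (Fin k) (Fin n) F) (hrank : G.rank = k)
    (i : Fin k) (δ1 : ℕ)
    (hδ1 : (∃ x ∈ Ciperp G i, x (Fin.last n) ≠ 0 ∧ hammingNorm x = δ1) ∧
      ∀ x ∈ Ciperp G i, x (Fin.last n) ≠ 0 → δ1 ≤ hammingNorm x)
    (R : Finset (Fin n)) (hR : recSet G i R) :
    δ1 - 1 ≤ R.card := by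
  rw [recSet, Finsupp.mem_span_image_iff_linearCombination] at hR
  obtain ⟨l, hl, hsum⟩ := hR
  -- the candidate dual codeword
  set x : Fin (n + 1) → F := Fin.snoc (fun j => l j) (-1) with hx
  have hxlast : x (Fin.last n) = -1 := by simp [hx]
  -- x annihilates each generator row
  have hgen : ∀ r : Fin k, ∑ j, x j * GiRow G i r j = 0 := by
    intro r
    have hrow : ∑ j : Fin n, l j * G r j = (if r = i then 1 else 0) := by
      have := congrFun hsum r
      rw [Finsupp.linearCombination_apply, Finsupp.sum_fintype] at this
      · have h2 : (∑ j : Fin n, l j • fun r => G r j) r = ∑ j : Fin n, l j * G r j := by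
          simp [Finset.sum_apply]
        rw [h2] at this
        rw [this, Pi.single_apply]
      · intro j; simp
    rw [Fin.sum_univ_castSucc]
    simp only [hx, GiRow, Fin.snoc_castSucc, Fin.snoc_last]
    rw [hrow]; ring
  -- x is in the dual code
  have hmem : x ∈ Ciperp G i := by
    intro c hc
    induction hc using Submodule.span_induction with
    | mem c hc => obtain ⟨r, rfl⟩ := hc; exact hgen r
    | zero => simp
    | add c d _ _ hc hd =>
        simp only [Pi.add_apply, mul_add, Finset.sum_add_distrib, hc, hd, add_zero]
    | smul a c _ hc =>
        simp only [Pi.smul_apply, smul_eq_mul]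
        rw [Finset.sum_congr rfl (fun j _ => by ring : ∀ j ∈ Finset.univ,
          x j * (a * c j) = a * (x j * c j)), ← Finset.mul_sum, hc, mul_zero]
  -- bound the weight of x
  have hwt : hammingNorm x ≤ R.card + 1 := by
    have hsub : (Finset.univ.filter fun j => x j ≠ 0) ⊆
        insert (Fin.last n) (R.image Fin.castSucc) := by
      intro j hj
      simp only [Finset.mem_filter] at hj
      rcases eq_or_ne j (Fin.last n) with h | h
      · subst h; exact Finset.mem_insert_self _ _
      · obtain ⟨j', rfl⟩ := (Fin.eq_castSucc_or_eq_last j).resolve_right h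
        have hxj : x j'.castSucc = l j' := by simp [hx]
        have : l j' ≠ 0 := by rw [← hxj]; exact hj.2
        have hj'R : j' ∈ R := by
          have := Finsupp.mem_supported F l |>.mp hl (Finsupp.mem_support_iff.mpr this)
          exact this
        exact Finset.mem_insert_of_mem (Finset.mem_image_of_mem _ hj'R)
    calc hammingNorm x ≤ (insert (Fin.last n) (R.image Fin.castSucc)).card :=
          Finset.card_le_card hsub
      _ ≤ (R.image Fin.castSucc).card + 1 := Finset.card_insert_le _ _
      _ ≤ R.card + 1 := by
          have := Finset.card_image_le (s := R) (f := Fin.castSucc); omega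
  have hδ := hδ1.2 x hmem (by rw [hxlast]; exact neg_ne_zero.mpr one_ne_zero)
  omega
end

section
/- Second Dual Distance Bound: for any recovery G-system R and any (λ_1,…,λ_k) ∈ Λ(R, 1), setting ℓ_i := min{λ_i, 1}, one has ∑_{i=1}^k ( (δ_i^2 − 1)(λ_i − ω_i ℓ_i) + (δ_i^1 − 1) ω_i ℓ_i ) ≤ n. -/
open Finset

/-! A recovery set `R` for object `i` is a set of columns combining to `e_i`; the coefficients,
followed by `-1`, form a dual codeword of `C_i` with nonzero last coordinate supported in
`R ∪ {n+1}`. So `|R| ≥ δ_i^1 - 1`, and even `|R| ≥ δ_i^2 - 1` unless `R` contains the support of a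
minimum-weight such codeword. Since a codeword and its `q - 1` nonzero multiples share a support,
there are at most `ω_i` of these supports; each is nonempty, so the recovery sets containing one of
them share a server and carry at most `min(λ_i, 1)` of the rate. Summing `|R|` against the
allocation counts every server's load, which is at most `1`, so the total is at most `n`. -/

theorem Finset.sum_filter_exists_le_sum_sum_filter {β γ : Type*} {s : Finset β}
    {t : Finset γ} (p : γ → β → Prop) [∀ y x, Decidable (p y x)] {f : β → ℝ}
    (hf : ∀ x ∈ s, 0 ≤ f x) :
    ∑ x ∈ s with ∃ y ∈ t, p y x, f x ≤ ∑ y ∈ t, ∑ x ∈ s with p y x, f x := by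
  calc ∑ x ∈ s with ∃ y ∈ t, p y x, f x
      ≤ ∑ x ∈ s with ∃ y ∈ t, p y x, #{y ∈ t | p y x} * f x := by
        refine sum_le_sum fun x hx => ?_
        obtain ⟨hxs, y, hy, hyx⟩ := mem_filter.mp hx
        have : (1 : ℝ) ≤ #{y ∈ t | p y x} := by
          exact_mod_cast card_pos.mpr ⟨y, mem_filter.mpr ⟨hy, hyx⟩⟩
        nlinarith [hf x hxs]
    _ ≤ ∑ x ∈ s, #{y ∈ t | p y x} * f x :=
        sum_le_sum_of_subset_of_nonneg (filter_subset _ _) fun x hx _ =>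
          mul_nonneg (Nat.cast_nonneg _) (hf x hx)
    _ = ∑ y ∈ t, ∑ x ∈ s with p y x, f x := by
        simp only [card_filter, Nat.cast_sum, sum_mul, Nat.cast_ite, Nat.cast_one, Nat.cast_zero,
          ite_mul, one_mul, zero_mul, sum_filter]
        exact sum_comm

theorem le_sum_mul_of_forall_le_of_forall_le {β : Type*} {s : Finset β} (p : β → Prop)
    [DecidablePred p] {a c : β → ℝ} {d₁ d₂ M : ℝ} (ha : ∀ x ∈ s, 0 ≤ a x)
    (h₁ : ∀ x ∈ s, p x → d₁ ≤ c x) (h₂ : ∀ x ∈ s, ¬ p x → d₂ ≤ c x) (hd : d₁ ≤ d₂)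
    (hM : ∑ x ∈ s with p x, a x ≤ M) :
    d₂ * (∑ x ∈ s, a x - M) + d₁ * M ≤ ∑ x ∈ s, c x * a x := by
  have hp : d₁ * ∑ x ∈ s with p x, a x ≤ ∑ x ∈ s with p x, c x * a x := by
    rw [mul_sum]
    exact sum_le_sum fun x hx => by
      obtain ⟨hxs, hpx⟩ := mem_filter.mp hx
      exact mul_le_mul_of_nonneg_right (h₁ x hxs hpx) (ha x hxs)
  have hnp : d₂ * ∑ x ∈ s with ¬ p x, a x ≤ ∑ x ∈ s with ¬ p x, c x * a x := by
    rw [mul_sum]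
    exact sum_le_sum fun x hx => by
      obtain ⟨hxs, hpx⟩ := mem_filter.mp hx
      exact mul_le_mul_of_nonneg_right (h₂ x hxs hpx) (ha x hxs)
  rw [← sum_filter_add_sum_filter_not s p, ← sum_filter_add_sum_filter_not s p (fun x => c x * a x)]
  nlinarith

section Allocation

variable {ι α : Type*} [Fintype ι] [DecidableEq α] {Rs : ι → Finset (Finset α)}
  {a : ι → Finset α → ℝ}

theorem sum_sum_card_mul_le_card [Fintype α]
    (hcap : ∀ j, ∑ i, ∑ R ∈ Rs i, (if j ∈ R then a i R else 0) ≤ 1) :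
    ∑ i, ∑ R ∈ Rs i, #R * a i R ≤ Fintype.card α := by
  calc ∑ i, ∑ R ∈ Rs i, #R * a i R
      = ∑ j, ∑ i, ∑ R ∈ Rs i, (if j ∈ R then a i R else 0) := by
        have hcard : ∀ i R, (#R : ℝ) * a i R = ∑ j, if j ∈ R then a i R else 0 := by
          intro i R
          rw [sum_ite_mem, univ_inter, sum_const, nsmul_eq_mul]
        simp only [hcard]
        rw [sum_comm]
        exact sum_congr rfl fun i _ => sum_comm
    _ ≤ ∑ _j : α, (1 : ℝ) := sum_le_sum fun j _ => hcap j
    _ = Fintype.card α := by simp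

theorem sum_filter_mem_le_one (ha : ∀ i R, 0 ≤ a i R)
    (hcap : ∀ j, ∑ i, ∑ R ∈ Rs i, (if j ∈ R then a i R else 0) ≤ 1) (i : ι) (j : α) :
    ∑ R ∈ Rs i with j ∈ R, a i R ≤ 1 := by
  rw [sum_filter]
  refine le_trans ?_ (hcap j)
  exact single_le_sum (f := fun i => ∑ R ∈ Rs i, (if j ∈ R then a i R else 0))
    (fun i _ => sum_nonneg fun R _ => by split_ifs <;> simp [ha]) (mem_univ i)

theorem sum_filter_exists_subset_le (ha : ∀ i R, 0 ≤ a i R)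
    (hcap : ∀ j, ∑ i, ∑ R ∈ Rs i, (if j ∈ R then a i R else 0) ≤ 1) (i : ι)
    {Ts : Finset (Finset α)} (hTs : ∀ T ∈ Ts, T.Nonempty) :
    ∑ R ∈ Rs i with ∃ T ∈ Ts, T ⊆ R, a i R ≤ #Ts * min (∑ R ∈ Rs i, a i R) 1 := by
  calc ∑ R ∈ Rs i with ∃ T ∈ Ts, T ⊆ R, a i R
      ≤ ∑ T ∈ Ts, ∑ R ∈ Rs i with T ⊆ R, a i R :=
        sum_filter_exists_le_sum_sum_filter _ fun R _ => ha i R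
    _ ≤ ∑ _T ∈ Ts, min (∑ R ∈ Rs i, a i R) 1 := by
        refine sum_le_sum fun T hT => le_min ?_ ?_
        · exact sum_le_sum_of_subset_of_nonneg (filter_subset _ _) fun R _ _ => ha i R
        · obtain ⟨j, hj⟩ := hTs T hT
          calc ∑ R ∈ Rs i with T ⊆ R, a i R ≤ ∑ R ∈ Rs i with j ∈ R, a i R :=
                sum_le_sum_of_subset_of_nonneg (monotone_filter_right _ fun R _ hTR => hTR hj)
                  fun R _ _ => ha i R
            _ ≤ 1 := sum_filter_mem_le_one ha hcap i j
    _ = #Ts * min (∑ R ∈ Rs i, a i R) 1 := by rw [sum_const, nsmul_eq_mul]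

end Allocation

section DualCode

variable {F : Type} [Field F] {k n : ℕ} {G : Matrix (Fin k) (Fin n) F} {i : Fin k}

theorem mem_Ciperp_of_forall_row {y : Fin (n + 1) → F}
    (h : ∀ r, ∑ j, y j * GiRow G i r j = 0) : y ∈ Ciperp G i := by
  intro c hc
  induction hc using Submodule.span_induction with
  | mem c hc => obtain ⟨r, rfl⟩ := hc; exact h r
  | zero => simp
  | add c d _ _ hc hd => simp [mul_add, sum_add_distrib, hc, hd]
  | smul t c _ hc => simp [mul_left_comm _ t, ← mul_sum, hc]

theorem smul_mem_Ciperp {y : Fin (n + 1) → F} (hy : y ∈ Ciperp G i) (t : F) :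
    t • y ∈ Ciperp G i := fun c hc => by
  simp [mul_assoc, ← mul_sum, hy c hc]

variable [DecidableEq F]

def puncturedSupport (x : Fin (n + 1) → F) : Finset (Fin n) := {j | x j.castSucc ≠ 0}

theorem hammingNorm_eq_card_puncturedSupport_add_one {x : Fin (n + 1) → F}
    (hx : x (Fin.last n) ≠ 0) : hammingNorm x = #(puncturedSupport x) + 1 := by
  simp [hammingNorm, puncturedSupport, card_filter, Fin.sum_univ_castSucc, hx]

theorem puncturedSupport_smul {t : F} (ht : t ≠ 0) (x : Fin (n + 1) → F) :
    puncturedSupport (t • x) = puncturedSupport x := by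
  simp [puncturedSupport, ht]

theorem puncturedSupport_nonempty {x : Fin (n + 1) → F} (hx : x ∈ Ciperp G i)
    (hlast : x (Fin.last n) ≠ 0) : (puncturedSupport x).Nonempty := by
  by_contra hempty
  have := hx (GiRow G i i) (Submodule.subset_span ⟨i, rfl⟩)
  simp_all [puncturedSupport, Fin.sum_univ_castSucc, GiRow, filter_eq_empty_iff]

theorem exists_mem_Ciperp_of_recSet {R : Finset (Fin n)} (hR : recSet G i R) :
    ∃ x ∈ Ciperp G i, x (Fin.last n) ≠ 0 ∧ puncturedSupport x ⊆ R := by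
  obtain ⟨l, hl, hsum⟩ := (Finsupp.mem_span_image_iff_linearCombination F).mp hR
  refine ⟨Fin.snoc (fun j => l j) (-1), mem_Ciperp_of_forall_row fun r => ?_, by simp, ?_⟩
  · have hev : ∑ j, l j * G r j = (Pi.single i 1 : Fin k → F) r := by
      rw [← hsum, Finsupp.linearCombination_apply, Finsupp.sum_fintype _ _ (by simp)]
      simp
    rw [Fin.sum_univ_castSucc]
    simp only [GiRow, Fin.snoc_castSucc, Fin.snoc_last, hev, Pi.single_apply]
    split_ifs <;> simp
  · intro j hj
    exact hl (Finsupp.mem_support_iff.mpr (by simpa [puncturedSupport] using hj))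

variable [Fintype F]

variable (G i) in
open Classical in
noncomputable def supportsOfWeight (d : ℕ) : Finset (Finset (Fin n)) :=
  (univ.filter fun x : Fin (n + 1) → F =>
    x ∈ Ciperp G i ∧ x (Fin.last n) ≠ 0 ∧ hammingNorm x = d).image puncturedSupport

theorem mem_supportsOfWeight {d : ℕ} {T : Finset (Fin n)} :
    T ∈ supportsOfWeight G i d ↔
      ∃ x ∈ Ciperp G i, x (Fin.last n) ≠ 0 ∧ hammingNorm x = d ∧ puncturedSupport x = T := by
  simp [supportsOfWeight, and_assoc]

variable (G i) in
theorem card_supportsOfWeight_mul_le (d : ℕ) :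
    #(supportsOfWeight G i d) * (Fintype.card F - 1) ≤
      Nat.card {x : Fin (n + 1) → F //
        x ∈ Ciperp G i ∧ x (Fin.last n) ≠ 0 ∧ hammingNorm x = d} := by
  classical
  rw [Nat.card_eq_fintype_card, Fintype.card_subtype, mul_comm]
  refine mul_card_image_le_card _ _ fun T hT => ?_
  obtain ⟨x, hx, rfl⟩ := mem_image.mp hT
  obtain ⟨hxC, hlast, hwt⟩ := (mem_filter.mp hx).2
  have hx0 : x ≠ 0 := fun h => hlast (by simp [h])
  calc Fintype.card F - 1 = #((univ.erase (0 : F)).image (· • x)) := by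
        rw [card_image_of_injective _ (smul_left_injective F hx0), card_erase_of_mem (mem_univ _),
          card_univ]
    _ ≤ _ := card_le_card fun y hy => by
        obtain ⟨t, ht, rfl⟩ := mem_image.mp hy
        have ht0 : t ≠ 0 := ne_of_mem_erase ht
        simp [smul_mem_Ciperp hxC, hlast, ht0, puncturedSupport_smul ht0,
          hammingNorm_smul (fun _ => (Ne.isUnit ht0).isSMulRegular F), hwt]

end DualCode

section RecoverySets

variable {F : Type} [Field F] [DecidableEq F] {k n : ℕ} {G : Matrix (Fin k) (Fin n) F}
  {i : Fin k}

theorem hammingNorm_le_card_add_one {x : Fin (n + 1) → F} {R : Finset (Fin n)}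
    (hlast : x (Fin.last n) ≠ 0) (hsub : puncturedSupport x ⊆ R) : hammingNorm x ≤ #R + 1 := by
  rw [hammingNorm_eq_card_puncturedSupport_add_one hlast]
  exact Nat.add_le_add_right (card_le_card hsub) 1

theorem le_sum_card_mul_of_recSet [Fintype F] {Rs : Fin k → Finset (Finset (Fin n))}
    {a : Fin k → Finset (Fin n) → ℝ} {d₁ d₂ w : ℕ}
    (hd₁ : ∀ x ∈ Ciperp G i, x (Fin.last n) ≠ 0 → d₁ ≤ hammingNorm x)
    (hd₂ : ∀ x ∈ Ciperp G i, x (Fin.last n) ≠ 0 → d₁ < hammingNorm x → d₂ ≤ hammingNorm x)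
    (hd : d₁ ≤ d₂) (hw : #(supportsOfWeight G i d₁) ≤ w) (hRs : ∀ R ∈ Rs i, recSet G i R)
    (ha : ∀ i R, 0 ≤ a i R)
    (hcap : ∀ j, ∑ i, ∑ R ∈ Rs i, (if j ∈ R then a i R else 0) ≤ 1) :
    ((d₂ : ℝ) - 1) * (∑ R ∈ Rs i, a i R - w * min (∑ R ∈ Rs i, a i R) 1) +
        ((d₁ : ℝ) - 1) * (w * min (∑ R ∈ Rs i, a i R) 1) ≤
      ∑ R ∈ Rs i, #R * a i R := by
  refine le_sum_mul_of_forall_le_of_forall_le (fun R => ∃ T ∈ supportsOfWeight G i d₁, T ⊆ R)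
    (fun R _ => ha i R) (fun R hR _ => ?_) (fun R hR hfree => ?_) (by simpa using hd) ?_
  · obtain ⟨x, hx, hlast, hsub⟩ := exists_mem_Ciperp_of_recSet (hRs R hR)
    have : d₁ ≤ #R + 1 := (hd₁ x hx hlast).trans (hammingNorm_le_card_add_one hlast hsub)
    rw [sub_le_iff_le_add]
    exact_mod_cast this
  · obtain ⟨x, hx, hlast, hsub⟩ := exists_mem_Ciperp_of_recSet (hRs R hR)
    have hheavy : d₁ < hammingNorm x := (hd₁ x hx hlast).lt_of_ne fun hmin =>
      hfree ⟨_, mem_supportsOfWeight.mpr ⟨x, hx, hlast, hmin.symm, rfl⟩, hsub⟩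
    have : d₂ ≤ #R + 1 := (hd₂ x hx hlast hheavy).trans (hammingNorm_le_card_add_one hlast hsub)
    rw [sub_le_iff_le_add]
    exact_mod_cast this
  · refine (sum_filter_exists_subset_le ha hcap i fun T hT => ?_).trans ?_
    · obtain ⟨x, hx, hlast, -, rfl⟩ := mem_supportsOfWeight.mp hT
      exact puncturedSupport_nonempty hx hlast
    · exact mul_le_mul_of_nonneg_right (by exact_mod_cast hw)
        (le_min (sum_nonneg fun R _ => ha i R) zero_le_one)

end RecoverySets

theorem second_dual_distance_bound_general {F : Type} [Field F] [Fintype F] [DecidableEq F] {k n : ℕ}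
    (G : Matrix (Fin k) (Fin n) F)
    (δ1 δ2 ω : Fin k → ℕ)
    (hδ1 : ∀ i, (∃ x ∈ Ciperp G i, x (Fin.last n) ≠ 0 ∧ hammingNorm x = δ1 i) ∧
      ∀ x ∈ Ciperp G i, x (Fin.last n) ≠ 0 → δ1 i ≤ hammingNorm x)
    (hδ2 : ∀ i,
      ((∃ x ∈ Ciperp G i, x (Fin.last n) ≠ 0 ∧ δ1 i < hammingNorm x) →
        ((∃ x ∈ Ciperp G i, x (Fin.last n) ≠ 0 ∧ hammingNorm x = δ2 i ∧
            δ1 i < hammingNorm x) ∧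
          ∀ x ∈ Ciperp G i, x (Fin.last n) ≠ 0 → δ1 i < hammingNorm x →
            δ2 i ≤ hammingNorm x)) ∧
      ((¬ ∃ x ∈ Ciperp G i, x (Fin.last n) ≠ 0 ∧ δ1 i < hammingNorm x) → δ2 i = δ1 i))
    (hω : ∀ i, ω i * (Fintype.card F - 1) =
      Nat.card {x : Fin (n + 1) → F //
        x ∈ Ciperp G i ∧ x (Fin.last n) ≠ 0 ∧ hammingNorm x = δ1 i})
    (Rs : Fin k → Finset (Finset (Fin n))) (hRs : recSystem G Rs)
    (lam : Fin k → ℝ) (h : inRegion Rs 1 lam) :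
    ∑ i, (((δ2 i : ℝ) - 1) * (lam i - (ω i : ℝ) * min (lam i) 1) +
        ((δ1 i : ℝ) - 1) * ((ω i : ℝ) * min (lam i) 1)) ≤ n := by
  obtain ⟨a, ha, hsum, hcap⟩ := h
  have hδ₂ : ∀ i, ∀ x ∈ Ciperp G i, x (Fin.last n) ≠ 0 → δ1 i < hammingNorm x →
      δ2 i ≤ hammingNorm x := fun i x hx hlast hheavy =>
    ((hδ2 i).1 ⟨x, hx, hlast, hheavy⟩).2 x hx hlast hheavy
  have hδ : ∀ i, δ1 i ≤ δ2 i := fun i => by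
    by_cases hex : ∃ x ∈ Ciperp G i, x (Fin.last n) ≠ 0 ∧ δ1 i < hammingNorm x
    · obtain ⟨x, -, -, hwt, hheavy⟩ := ((hδ2 i).1 hex).1
      exact hwt ▸ hheavy.le
    · exact ((hδ2 i).2 hex).ge
  have hω' : ∀ i, #(supportsOfWeight G i (δ1 i)) ≤ ω i := fun i =>
    Nat.le_of_mul_le_mul_right ((card_supportsOfWeight_mul_le G i _).trans (hω i).ge)
      (Nat.sub_pos_of_lt Fintype.one_lt_card)
  calc _ ≤ ∑ i, ∑ R ∈ Rs i, (#R : ℝ) * a i R := sum_le_sum fun i _ => by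
        simpa only [hsum] using
          le_sum_card_mul_of_recSet (hδ1 i).2 (hδ₂ i) (hδ i) (hω' i) (hRs i).2 ha hcap
    _ ≤ n := by simpa using sum_sum_card_mul_le_card hcap

/-- Second Dual Distance Bound. -/
theorem second_dual_distance_bound {F : Type} [Field F] [Fintype F] [DecidableEq F] {k n : ℕ}
    (G : Matrix (Fin k) (Fin n) F)
    (hrank : G.rank = k) (hcol : ∀ j : Fin n, ∃ i : Fin k, G i j ≠ 0)
    (δ1 δ2 ω : Fin k → ℕ)
    (hδ1 : ∀ i, (∃ x ∈ Ciperp G i, x (Fin.last n) ≠ 0 ∧ hammingNorm x = δ1 i) ∧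
      ∀ x ∈ Ciperp G i, x (Fin.last n) ≠ 0 → δ1 i ≤ hammingNorm x)
    (hδ2 : ∀ i,
      ((∃ x ∈ Ciperp G i, x (Fin.last n) ≠ 0 ∧ δ1 i < hammingNorm x) →
        ((∃ x ∈ Ciperp G i, x (Fin.last n) ≠ 0 ∧ hammingNorm x = δ2 i ∧
            δ1 i < hammingNorm x) ∧
          ∀ x ∈ Ciperp G i, x (Fin.last n) ≠ 0 → δ1 i < hammingNorm x →
            δ2 i ≤ hammingNorm x)) ∧
      ((¬ ∃ x ∈ Ciperp G i, x (Fin.last n) ≠ 0 ∧ δ1 i < hammingNorm x) → δ2 i = δ1 i))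
    (hω : ∀ i, ω i * (Fintype.card F - 1) =
      Nat.card {x : Fin (n + 1) → F //
        x ∈ Ciperp G i ∧ x (Fin.last n) ≠ 0 ∧ hammingNorm x = δ1 i})
    (Rs : Fin k → Finset (Finset (Fin n))) (hRs : recSystem G Rs)
    (lam : Fin k → ℝ) (h : inRegion Rs 1 lam) :
    ∑ i, (((δ2 i : ℝ) - 1) * (lam i - (ω i : ℝ) * min (lam i) 1) +
        ((δ1 i : ℝ) - 1) * ((ω i : ℝ) * min (lam i) 1)) ≤ n :=
  second_dual_distance_bound_general G δ1 δ2 ω hδ1 hδ2 hω Rs hRs lam h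
end

section
/- If G is systematic and d⊥ ≥ 3, then for every i ∈ {1,…,k} the vector (e_i, −1) ∈ F_q^{n+1} (value 1 in position i, −1 in position n+1, zero elsewhere) is, up to nonzero scalar multiples, the unique codeword of C_i^⊥ of Hamming weight 2 whose support contains n+1; in particular ω_i = 1. -/
open Finset

lemma pairing_span {F : Type} [Field F] {m N : ℕ} (M : Fin m → Fin N → F) (y : Fin N → F)
    (h : ∀ r, ∑ j, y j * M r j = 0) :
    ∀ c ∈ Submodule.span F (Set.range M), ∑ j, y j * c j = 0 := by
  intro c hc
  induction hc using Submodule.span_induction with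
  | mem z hz => obtain ⟨r, rfl⟩ := hz; exact h r
  | zero => simp
  | add a b _ _ ha hb =>
      simp only [Pi.add_apply, mul_add, Finset.sum_add_distrib, ha, hb, add_zero]
  | smul t a _ ha =>
      simp only [Pi.smul_apply, smul_eq_mul, mul_left_comm, ← Finset.mul_sum, ha, mul_zero]

-- pairing of x ∈ Ciperp with each row
lemma ciperp_row {F : Type} [Field F] {k n : ℕ} (G : Matrix (Fin k) (Fin n) F) (i : Fin k)
    (x : Fin (n+1) → F) (hx : x ∈ Ciperp G i) (r : Fin k) :
    (∑ j : Fin n, x (Fin.castSucc j) * G r j) + x (Fin.last n) * (if r = i then 1 else 0) = 0 := by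
  have h := hx (GiRow G i r) (Submodule.subset_span (Set.mem_range_self r))
  rw [Fin.sum_univ_castSucc] at h
  simpa only [GiRow, Fin.snoc_castSucc, Fin.snoc_last] using h
/-- if `G` is systematic and `d⊥ ≥ 3`, the vector with `1` in position `i`,
`−1` in position `n+1` and `0` elsewhere is, up to nonzero scalar multiples, the unique
weight-2 codeword of `C_i^⊥` whose support contains `n+1`; in particular `ω_i = 1`. -/
theorem weight_two_codeword_unique {F : Type} [Field F] [Fintype F] [DecidableEq F] {k n : ℕ}
    (hkn : k ≤ n) (G : Matrix (Fin k) (Fin n) F)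
    (hrank : G.rank = k) (hsys : systematic hkn G)
    (d : ℕ)
    (hdmin : (∃ y ∈ dualCode G, y ≠ 0 ∧ hammingNorm y = d) ∧
      ∀ y ∈ dualCode G, y ≠ 0 → d ≤ hammingNorm y)
    (hd3 : 3 ≤ d)
    (i : Fin k) (δ1 ω : ℕ)
    (hδ1 : (∃ x ∈ Ciperp G i, x (Fin.last n) ≠ 0 ∧ hammingNorm x = δ1) ∧
      ∀ x ∈ Ciperp G i, x (Fin.last n) ≠ 0 → δ1 ≤ hammingNorm x)
    (hω : ω * (Fintype.card F - 1) =
      Nat.card {x : Fin (n + 1) → F //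
        x ∈ Ciperp G i ∧ x (Fin.last n) ≠ 0 ∧ hammingNorm x = δ1})
    (v : Fin (n + 1) → F)
    (hv : v = fun j => if j = Fin.castSucc (Fin.castLE hkn i) then 1
      else if j = Fin.last n then -1 else 0) :
    v ∈ Ciperp G i ∧ hammingNorm v = 2 ∧
      (∀ x ∈ Ciperp G i, x (Fin.last n) ≠ 0 → hammingNorm x = 2 →
        ∃ c : F, c ≠ 0 ∧ x = c • v) ∧
      ω = 1 := by
  have hω' : ∀ m : ℕ, Nat.card {x : Fin (n + 1) → F //
      x ∈ Ciperp G i ∧ x (Fin.last n) ≠ 0 ∧ hammingNorm x = δ1} = m →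
      ω * (Fintype.card F - 1) = m := fun m hm => hω.trans hm
  clear hω
  set i' : Fin n := Fin.castLE hkn i with hi'
  set ic : Fin (n + 1) := Fin.castSucc i' with hic
  clear_value ic
  clear_value i'
  have hicl : ic ≠ Fin.last n := by
    rw [hic]; exact Fin.ne_of_lt (Fin.castSucc_lt_last i')
  have hsys' : ∀ r, G r i' = if r = i then 1 else 0 := by
    rw [hi']; exact fun r => hsys i r
  -- pointwise values of v
  have hvic : v ic = 1 := by simp [hv]
  have hvlastval : v (Fin.last n) = -1 := by
    simp [hv, Ne.symm hicl]
  have hvlast : v (Fin.last n) ≠ 0 := by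
    rw [hvlastval]; exact neg_ne_zero.mpr one_ne_zero
  have hvcs : ∀ j : Fin n, v (Fin.castSucc j) = if j = i' then 1 else 0 := by
    intro j
    rcases eq_or_ne j i' with rfl | hj
    · simp [hv, hic]
    · simp [hv, hic, Fin.castSucc_inj, hj, Fin.ne_of_lt (Fin.castSucc_lt_last j)]
  have hv0 : ∀ j, j ≠ ic → j ≠ Fin.last n → v j = 0 := by
    intro j h1 h2; simp [hv, h1, h2]
  -- v ∈ Ciperp
  have hvC : v ∈ Ciperp G i := by
    apply pairing_span
    intro r
    rw [Fin.sum_univ_castSucc]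
    simp only [GiRow, Fin.snoc_castSucc, Fin.snoc_last]
    have hsum : (∑ j : Fin n, v (Fin.castSucc j) * G r j) = G r i' := by
      rw [Finset.sum_congr rfl (fun j _ => by rw [hvcs j])]
      rw [Finset.sum_eq_single i']
      · rw [if_pos rfl, one_mul]
      · intro b _ hb; rw [if_neg hb, zero_mul]
      · simp
    rw [hsum, hvlastval, hsys' r]
    ring
  -- weight of v
  have hvfilt : Finset.univ.filter (fun j => v j ≠ 0) = {ic, Fin.last n} := by
    ext j
    simp only [Finset.mem_filter, Finset.mem_univ, true_and, Finset.mem_insert,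
      Finset.mem_singleton]
    constructor
    · intro hj
      by_contra hc
      push_neg at hc
      exact hj (hv0 j hc.1 hc.2)
    · rintro (rfl | rfl)
      · rw [hvic]; exact one_ne_zero
      · exact hvlast
  have hwv : hammingNorm v = 2 := by
    show (Finset.univ.filter (fun j => v j ≠ 0)).card = 2
    rw [hvfilt, Finset.card_insert_of_notMem (by simp [hicl]), Finset.card_singleton]
  -- uniqueness
  have key : ∀ x ∈ Ciperp G i, x (Fin.last n) ≠ 0 → hammingNorm x = 2 →
      ∃ c : F, c ≠ 0 ∧ x = c • v := by
    intro x hx hxl hx2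
    have hfilt : (Finset.univ.filter (fun j => x j ≠ 0)).card = 2 := hx2
    obtain ⟨j1, hj1mem, hj1ne⟩ : ∃ j1, x j1 ≠ 0 ∧ j1 ≠ Fin.last n := by
      by_contra hcon
      push_neg at hcon
      have hsub : Finset.univ.filter (fun j => x j ≠ 0) ⊆ {Fin.last n} := by
        intro j hj
        simp only [Finset.mem_filter, Finset.mem_univ, true_and] at hj
        simp [hcon j hj]
      have := Finset.card_le_card hsub
      rw [hfilt, Finset.card_singleton] at this
      omega
    obtain ⟨j0, rfl⟩ : ∃ j0 : Fin n, j1 = Fin.castSucc j0 :=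
      ⟨j1.castPred hj1ne, (Fin.castSucc_castPred _ _).symm⟩
    have hpair : ({Fin.castSucc j0, Fin.last n} : Finset (Fin (n+1))).card = 2 := by
      rw [Finset.card_insert_of_notMem (by simp [hj1ne]), Finset.card_singleton]
    have hfeq : Finset.univ.filter (fun j => x j ≠ 0) = {Fin.castSucc j0, Fin.last n} := by
      refine (Finset.eq_of_subset_of_card_le ?_ ?_).symm
      · intro j hj
        simp only [Finset.mem_insert, Finset.mem_singleton] at hj
        rcases hj with rfl | rfl <;> simp [hj1mem, hxl]
      · rw [hfilt, hpair]
    have hzero : ∀ j, j ≠ Fin.castSucc j0 → j ≠ Fin.last n → x j = 0 := by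
      intro j h1 h2
      by_contra h
      have hm : j ∈ Finset.univ.filter (fun j => x j ≠ 0) := by simp [h]
      rw [hfeq] at hm
      simp [h1, h2] at hm
    have hrow : ∀ r, x (Fin.castSucc j0) * G r j0
        + x (Fin.last n) * (if r = i then 1 else 0) = 0 := by
      intro r
      have h := ciperp_row G i x hx r
      rwa [Finset.sum_eq_single j0 (fun c _ hc => by
        rw [hzero _ (by simpa [Fin.castSucc_inj] using hc)
          (Fin.ne_of_lt (Fin.castSucc_lt_last c)), zero_mul]) (by simp)] at h
    by_cases hji : j0 = i'
    · have heq : Fin.castSucc j0 = ic := by rw [hic, hji]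
      have hGi : ∀ r, G r j0 = if r = i then 1 else 0 := by rw [hji]; exact hsys'
      have h1 := hrow i
      rw [hGi i, if_pos rfl] at h1
      simp only [mul_one] at h1
      refine ⟨x (Fin.castSucc j0), hj1mem, ?_⟩
      funext j
      rcases eq_or_ne j ic with rfl | h1j
      · rw [Pi.smul_apply, smul_eq_mul, hvic, mul_one, ← heq]
      · rcases eq_or_ne j (Fin.last n) with rfl | h2j
        · rw [Pi.smul_apply, smul_eq_mul, hvlastval, eq_neg_of_add_eq_zero_right h1]
          ring
        · rw [hzero j (by rw [heq]; exact h1j) h2j, Pi.smul_apply, smul_eq_mul,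
            hv0 j h1j h2j, mul_zero]
    · exfalso
      set z : Fin n → F := fun j => if j = j0 then x (Fin.castSucc j0)
        else if j = i' then x (Fin.last n) else 0 with hz
      clear_value z
      have hz1 : z j0 = x (Fin.castSucc j0) := by simp [hz]
      have hz2 : z i' = x (Fin.last n) := by simp [hz, Ne.symm hji]
      have hz0 : ∀ j, j ≠ j0 → j ≠ i' → z j = 0 := by
        intro j h1 h2; simp [hz, h1, h2]
      have hzdual : z ∈ dualCode G := by
        apply pairing_span
        intro r
        have hsum : ∑ j, z j * G r j
            = x (Fin.castSucc j0) * G r j0 + x (Fin.last n) * G r i' := by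
          rw [← Finset.sum_subset (Finset.subset_univ {j0, i'})]
          · rw [Finset.sum_insert (by simp [hji]), Finset.sum_singleton, hz1, hz2]
          · intro j _ hj
            simp only [Finset.mem_insert, Finset.mem_singleton, not_or] at hj
            rw [hz0 j hj.1 hj.2, zero_mul]
        rw [hsum, hsys' r]
        exact hrow r
      have hzne : z ≠ 0 := fun h0 => hj1mem (by rw [← hz1, h0]; rfl)
      have hzw : hammingNorm z ≤ 2 := by
        have hsub : Finset.univ.filter (fun j => z j ≠ 0) ⊆ {j0, i'} := by
          intro j hj
          simp only [Finset.mem_filter, Finset.mem_univ, true_and] at hj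
          by_contra hc
          simp only [Finset.mem_insert, Finset.mem_singleton, not_or] at hc
          exact hj (hz0 j hc.1 hc.2)
        calc hammingNorm z = (Finset.univ.filter (fun j => z j ≠ 0)).card := rfl
          _ ≤ ({j0, i'} : Finset (Fin n)).card := Finset.card_le_card hsub
          _ ≤ 2 := by simpa using Finset.card_insert_le j0 ({i'} : Finset (Fin n))
      have := hdmin.2 z hzdual hzne
      omega
  -- lower bound 2 for weight of codewords with nonzero last coordinate
  have h2le : ∀ x ∈ Ciperp G i, x (Fin.last n) ≠ 0 → 2 ≤ hammingNorm x := by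
    intro x hx hxl
    by_contra hlt
    push_neg at hlt
    have hcard1 : (Finset.univ.filter (fun j => x j ≠ 0)).card ≤ 1 := by
      have : hammingNorm x = (Finset.univ.filter (fun j => x j ≠ 0)).card := rfl
      omega
    have hone : ∀ j, x j ≠ 0 → j = Fin.last n :=
      fun j hj => Finset.card_le_one.mp hcard1 j (by simp [hj]) (Fin.last n) (by simp [hxl])
    have h := ciperp_row G i x hx i
    rw [if_pos rfl, mul_one] at h
    have hsum0 : ∑ j : Fin n, x (Fin.castSucc j) * G i j = 0 := by
      apply Finset.sum_eq_zero
      intro j _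
      have hxj : x (Fin.castSucc j) = 0 := by
        by_contra hc
        exact (Fin.ne_of_lt (Fin.castSucc_lt_last j)) (hone _ hc)
      rw [hxj, zero_mul]
    rw [hsum0, zero_add] at h
    exact hxl h
  -- δ1 = 2
  have hδ2 : δ1 = 2 := by
    have h1 := hδ1.2 v hvC hvlast
    rw [hwv] at h1
    obtain ⟨x, hx, hxl, hxn⟩ := hδ1.1
    have h2 := h2le x hx hxl
    omega
  subst hδ2
  -- ω = 1
  have hsmulC : ∀ c : F, c • v ∈ Ciperp G i := by
    intro c w hw
    have h := hvC w hw
    simp only [Pi.smul_apply, smul_eq_mul, mul_assoc, ← Finset.mul_sum, h, mul_zero]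
  have e : {c : F // c ≠ 0} ≃ {x : Fin (n + 1) → F //
      x ∈ Ciperp G i ∧ x (Fin.last n) ≠ 0 ∧ hammingNorm x = 2} := by
    refine Equiv.ofBijective (fun c => ⟨c.1 • v, hsmulC c.1,
      mul_ne_zero c.2 hvlast, ?_⟩) ⟨?_, ?_⟩
    · have hfe : Finset.univ.filter (fun j => (c.1 • v) j ≠ 0)
          = Finset.univ.filter (fun j => v j ≠ 0) := by
        ext j
        simp [smul_eq_mul, mul_eq_zero, c.2]
      show (Finset.univ.filter (fun j => (c.1 • v) j ≠ 0)).card = 2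
      rw [hfe]; exact hwv
    · intro c c' hcc
      have := congrFun (congrArg Subtype.val hcc) ic
      simp only [Pi.smul_apply, smul_eq_mul, hvic, mul_one] at this
      exact Subtype.ext this
    · rintro ⟨x, hx, hxl, hx2⟩
      obtain ⟨c, hc, hxeq⟩ := key x hx hxl hx2
      exact ⟨⟨c, hc⟩, Subtype.ext hxeq.symm⟩
  have hcard : Nat.card {x : Fin (n + 1) → F //
      x ∈ Ciperp G i ∧ x (Fin.last n) ≠ 0 ∧ hammingNorm x = 2} = Fintype.card F - 1 := by
    rw [← Nat.card_congr e, Nat.card_eq_fintype_card, ← Fintype.card_units]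
    exact (Fintype.card_congr unitsEquivNeZero).symm
  have hω2 := hω' _ hcard
  clear hω' hcard e
  have hq : 1 < Fintype.card F := Fintype.one_lt_card
  refine ⟨hvC, hwv, key, ?_⟩
  have hpos : 0 < Fintype.card F - 1 := by omega
  exact Nat.eq_of_mul_eq_mul_right hpos (by rw [hω2, one_mul])
end

section
/- If G is systematic and d⊥ ≥ 3, then for every i ∈ {1,…,k}: δ_i^2 ≥ d⊥, where δ_i^2 is the second smallest weight of a codeword of C_i^⊥ with n+1 in its support. -/
open Finset

theorem hammingDist_add_single_le_one {ι β : Type*} [Fintype ι] [DecidableEq ι] [AddZeroClass β]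
    [DecidableEq β] (y : ι → β) (c : ι) (a : β) :
    hammingDist y (y + Pi.single c a) ≤ 1 := by
  refine (card_le_card fun j hj => ?_).trans (card_singleton c).le
  by_contra hjc
  simp_all [Pi.single_apply]

theorem hammingNorm_eq_hammingNorm_init_add_one {β : Type*} [Zero β] [DecidableEq β] {n : ℕ}
    {x : Fin (n + 1) → β} (hlast : x (Fin.last n) ≠ 0) :
    hammingNorm x = hammingNorm (Fin.init x) + 1 := by
  rw [hammingNorm, hammingNorm, card_filter, card_filter, Fin.sum_univ_castSucc,
    if_pos hlast]
  rfl

theorem mem_dualCode_of_forall_dotProduct_row_eq_zero {F : Type} [Field F] {k n : ℕ}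
    {G : Matrix (Fin k) (Fin n) F} {y : Fin n → F} (hy : ∀ r, y ⬝ᵥ G r = 0) :
    y ∈ dualCode G := fun _ hc =>
  (Submodule.span_le (p := LinearMap.ker (dotProductBilin F F y))).2
    (by rintro _ ⟨r, rfl⟩; exact hy r) hc

section Ciperp

variable {F : Type} [Field F] {k n : ℕ} {G : Matrix (Fin k) (Fin n) F} {i : Fin k}
  {x : Fin (n + 1) → F}

theorem init_dotProduct_row_add_eq_zero_of_mem_Ciperp (hx : x ∈ Ciperp G i) (r : Fin k) :
    Fin.init x ⬝ᵥ G r + (if r = i then x (Fin.last n) else 0) = 0 := by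
  have h := hx _ (Submodule.subset_span ⟨r, rfl⟩)
  simpa [Fin.sum_univ_castSucc, GiRow, dotProduct, Fin.init] using h

theorem init_ne_zero_of_mem_Ciperp (hx : x ∈ Ciperp G i) (hlast : x (Fin.last n) ≠ 0) :
    Fin.init x ≠ 0 := by
  intro h
  exact hlast (by simpa [h] using init_dotProduct_row_add_eq_zero_of_mem_Ciperp hx i)

theorem two_le_hammingNorm_of_mem_Ciperp [DecidableEq F] (hx : x ∈ Ciperp G i)
    (hlast : x (Fin.last n) ≠ 0) : 2 ≤ hammingNorm x := by
  have := hammingNorm_pos_iff.2 (init_ne_zero_of_mem_Ciperp hx hlast)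
  rw [hammingNorm_eq_hammingNorm_init_add_one hlast]
  omega

theorem init_add_single_mem_dualCode {c : Fin n} (hcol : ∀ r, G r c = if r = i then 1 else 0)
    (hx : x ∈ Ciperp G i) : Fin.init x + Pi.single c (x (Fin.last n)) ∈ dualCode G := by
  refine mem_dualCode_of_forall_dotProduct_row_eq_zero fun r => ?_
  rw [add_dotProduct, single_dotProduct, hcol, mul_ite, mul_one, mul_zero]
  exact init_dotProduct_row_add_eq_zero_of_mem_Ciperp hx r

end Ciperp

theorem delta2_ge_dual_dist_general {F : Type} [Field F] [DecidableEq F] {k n : ℕ}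
    (hkn : k ≤ n) (G : Matrix (Fin k) (Fin n) F)
    (hsys : systematic hkn G)
    (d : ℕ)
    (hdmin : (∃ y ∈ dualCode G, y ≠ 0 ∧ hammingNorm y = d) ∧
      ∀ y ∈ dualCode G, y ≠ 0 → d ≤ hammingNorm y)
    (i : Fin k) (δ1 δ2 : ℕ)
    (hδ1 : (∃ x ∈ Ciperp G i, x (Fin.last n) ≠ 0 ∧ hammingNorm x = δ1) ∧
      ∀ x ∈ Ciperp G i, x (Fin.last n) ≠ 0 → δ1 ≤ hammingNorm x)
    (hδ2 : (∃ x ∈ Ciperp G i, x (Fin.last n) ≠ 0 ∧ hammingNorm x = δ2 ∧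
        δ1 < hammingNorm x) ∧
      ∀ x ∈ Ciperp G i, x (Fin.last n) ≠ 0 → δ1 < hammingNorm x →
        δ2 ≤ hammingNorm x) :
    d ≤ δ2 := by
  obtain ⟨x₁, hx₁, hx₁last, rfl⟩ := hδ1.1
  obtain ⟨x, hx, hlast, rfl, hlt⟩ := hδ2.1
  have h₁ := two_le_hammingNorm_of_mem_Ciperp hx₁ hx₁last
  -- Column `i` of the systematic `G` equals the column `e_iᵀ` appended in `G_i`, so folding the
  -- last coordinate of `x` onto it gives a dual codeword of `C` at Hamming distance ≤ 1 from
  -- `Fin.init x`, which has weight `wt x - 1 ≥ 2`.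
  set y := Fin.init x + Pi.single (Fin.castLE hkn i) (x (Fin.last n))
  have hy : y ∈ dualCode G := init_add_single_mem_dualCode (hsys i) hx
  have hdist : hammingDist (Fin.init x) y ≤ 1 := hammingDist_add_single_le_one _ _ _
  have hinit := hammingNorm_eq_hammingNorm_init_add_one hlast
  have hy_le : hammingNorm y ≤ hammingNorm x := by
    have := hammingDist_triangle y (Fin.init x) 0
    rw [hammingDist_zero_right, hammingDist_zero_right, hammingDist_comm] at this
    omega
  have hy_ne : y ≠ 0 := by
    have := hammingDist_triangle (Fin.init x) y 0
    rw [hammingDist_zero_right, hammingDist_zero_right] at this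
    exact hammingNorm_pos_iff.1 (by omega)
  exact (hdmin.2 y hy hy_ne).trans hy_le

/-- if `G` is systematic and `d⊥ ≥ 3`, then `δ_i^2 ≥ d⊥`. -/
theorem delta2_ge_dual_dist {F : Type} [Field F] [Fintype F] [DecidableEq F] {k n : ℕ}
    (hkn : k ≤ n) (G : Matrix (Fin k) (Fin n) F)
    (hrank : G.rank = k) (hsys : systematic hkn G)
    (d : ℕ)
    (hdmin : (∃ y ∈ dualCode G, y ≠ 0 ∧ hammingNorm y = d) ∧
      ∀ y ∈ dualCode G, y ≠ 0 → d ≤ hammingNorm y)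
    (hd3 : 3 ≤ d)
    (i : Fin k) (δ1 δ2 : ℕ)
    (hδ1 : (∃ x ∈ Ciperp G i, x (Fin.last n) ≠ 0 ∧ hammingNorm x = δ1) ∧
      ∀ x ∈ Ciperp G i, x (Fin.last n) ≠ 0 → δ1 ≤ hammingNorm x)
    (hδ2 : (∃ x ∈ Ciperp G i, x (Fin.last n) ≠ 0 ∧ hammingNorm x = δ2 ∧
        δ1 < hammingNorm x) ∧
      ∀ x ∈ Ciperp G i, x (Fin.last n) ≠ 0 → δ1 < hammingNorm x →
        δ2 ≤ hammingNorm x) :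
    d ≤ δ2 :=
  delta2_ge_dual_dist_general hkn G hsys d hdmin i δ1 δ2 hδ1 hδ2
end
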